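/- arXiv:1308.1057 — 4 statements merged into one kernel-verified Lean document; each statement's English description precedes it below -/
import Mathlib

section
/- Let μ be a compactly supported probability measure on ℝ with Stieltjes transform m_μ, and let R > 0. There exist constants C₀, C₁ > 0 (depending only on R and the support of μ) such that the following holds. Suppose z, s, s' lie in the closed upper half-plane with |z| ≤ R, Im(s) ≥ 0, Im(z) + Im(s) ≥ η > 0, s = m_μ(z + s) + O(ε) and s' = m_μ(z + s') with Im(s') > 0, where 0 < ε ≤ 1. Then |s|, |s'| ≤ C₀ and |s' - s| ≤ C₁(ε^{1/3} + ε^{1/2}/η^{1/2}). -/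
/-!
Put `w = z + s`, `w' = z + s'` and `L = ∫ dμ(x) / ((x - w)(x - w'))`. The resolvent identity
`m(w) - m(w') = (w - w') L` together with `s' = m(w')` gives `(s - s')(1 - L) = s - m(w)`, so
`|s - s'| ≤ ε / |1 - L|`, which is good as long as `|1 - L| ≥ ε^{2/3}`. Otherwise `Re L` is close
to `1`, and Jensen's inequality applied to `1/(x - w) - conj (1/(x - w'))`, together with
`Im m(w) = Im w · ∫ |x - w|⁻² dμ`, shows `|m(w) - conj s'|² ≤ ε/η + 2 ε^{2/3}`. Thus `s` is close
to `conj s'`; as both lie in the closed upper half-plane, both imaginary parts are small, and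
hence so is `s - s'`.

The a priori bound: either the support of `μ` stays at distance `≥ 1` from `z + s`, so that
`|m(z + s)| ≤ 1`, or some point `x` of it is within distance `1`, and `|s| ≤ 1 + |x| + |z|`.
-/

open MeasureTheory

/-- The Stieltjes transform of a measure on ℝ. -/
noncomputable def stieltjes (μ : Measure ℝ) (z : ℂ) : ℂ := ∫ x, ((x : ℂ) - z)⁻¹ ∂μ

open Complex ComplexConjugate

theorem sq_norm_integral_le_integral_sq_norm {α E : Type*} [MeasurableSpace α]
    [NormedAddCommGroup E] [NormedSpace ℝ E] [CompleteSpace E]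
    {μ : Measure α} [IsProbabilityMeasure μ] {f : α → E} (hf : Integrable f μ)
    (hf2 : Integrable (fun x => ‖f x‖ ^ 2) μ) :
    ‖∫ x, f x ∂μ‖ ^ 2 ≤ ∫ x, ‖f x‖ ^ 2 ∂μ :=
  (convexOn_univ_norm.pow (fun _ _ => norm_nonneg _) 2).map_integral_le
    (continuous_norm.pow 2).continuousOn isClosed_univ (ae_of_all _ fun _ => Set.mem_univ _) hf hf2

section Resolvent

variable {w : ℂ}

theorem ofReal_sub_ne_zero_of_im_pos (hw : 0 < w.im) (x : ℝ) : (x : ℂ) - w ≠ 0 := by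
  intro h
  have := congrArg Complex.im h
  simp at this
  linarith

theorem norm_inv_ofReal_sub_le (hw : 0 < w.im) (x : ℝ) : ‖((x : ℂ) - w)⁻¹‖ ≤ w.im⁻¹ := by
  rw [norm_inv]
  refine inv_anti₀ hw ?_
  simpa using abs_le.1 (abs_im_le_norm ((x : ℂ) - w)) |>.1

theorem im_inv_ofReal_sub (x : ℝ) :
    (((x : ℂ) - w)⁻¹).im = w.im * ‖((x : ℂ) - w)⁻¹‖ ^ 2 := by
  rw [inv_im, norm_inv, inv_pow, Complex.sq_norm]
  simp [div_eq_mul_inv]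

theorem integrable_inv_ofReal_sub (μ : Measure ℝ) [IsFiniteMeasure μ] (hw : 0 < w.im) :
    Integrable (fun x : ℝ => ((x : ℂ) - w)⁻¹) μ :=
  .of_bound (by fun_prop : Measurable fun x : ℝ => ((x : ℂ) - w)⁻¹).aestronglyMeasurable
    _ (ae_of_all _ (norm_inv_ofReal_sub_le hw))

theorem integrable_sq_norm_inv_ofReal_sub (μ : Measure ℝ) [IsFiniteMeasure μ] (hw : 0 < w.im) :
    Integrable (fun x : ℝ => ‖((x : ℂ) - w)⁻¹‖ ^ 2) μ :=
  ((integrable_inv_ofReal_sub μ hw).im.div_const w.im).congr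
    (ae_of_all _ fun x => by
      simp only [RCLike.im_to_complex, im_inv_ofReal_sub, mul_div_cancel_left₀ _ hw.ne'])

end Resolvent

section Stieltjes

variable (μ : Measure ℝ) {w w' : ℂ}

/-- The divided difference `(m(w) - m(w')) / (w - w')` of the Stieltjes transform `m`
(and `m'(w)` when `w = w'`). -/
noncomputable def stieltjesSlope (w w' : ℂ) : ℂ :=
  ∫ x, ((x : ℂ) - w)⁻¹ * ((x : ℂ) - w')⁻¹ ∂μ

variable [IsFiniteMeasure μ]

theorem stieltjes_sub_stieltjes (hw : 0 < w.im) (hw' : 0 < w'.im) :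
    stieltjes μ w - stieltjes μ w' = (w - w') * stieltjesSlope μ w w' := by
  rw [stieltjes, stieltjes, stieltjesSlope, ← integral_const_mul,
    ← integral_sub (integrable_inv_ofReal_sub μ hw) (integrable_inv_ofReal_sub μ hw')]
  congr 1 with x
  have := ofReal_sub_ne_zero_of_im_pos hw x
  have := ofReal_sub_ne_zero_of_im_pos hw' x
  field_simp
  ring

theorem integral_sq_norm_inv_ofReal_sub (hw : 0 < w.im) :
    ∫ x, ‖((x : ℂ) - w)⁻¹‖ ^ 2 ∂μ = (stieltjes μ w).im / w.im := by
  have hint := integral_im (integrable_inv_ofReal_sub μ hw)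
  simp only [RCLike.im_to_complex, im_inv_ofReal_sub] at hint
  rw [stieltjes, ← hint, integral_const_mul]
  field_simp

theorem sq_norm_stieltjes_sub_conj_le [IsProbabilityMeasure μ] (hw : 0 < w.im) (hw' : 0 < w'.im) :
    ‖stieltjes μ w - conj (stieltjes μ w')‖ ^ 2 ≤
      (stieltjes μ w).im / w.im + (stieltjes μ w').im / w'.im
        - 2 * (stieltjesSlope μ w w').re := by
  set f : ℝ → ℂ := fun x => ((x : ℂ) - w)⁻¹
  set g : ℝ → ℂ := fun x => ((x : ℂ) - w')⁻¹
  have hf : Integrable f μ := integrable_inv_ofReal_sub μ hw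
  have hg : Integrable g μ := integrable_inv_ofReal_sub μ hw'
  have hf2 : Integrable (fun x => ‖f x‖ ^ 2) μ := integrable_sq_norm_inv_ofReal_sub μ hw
  have hg2 : Integrable (fun x => ‖g x‖ ^ 2) μ := integrable_sq_norm_inv_ofReal_sub μ hw'
  have hfg : Integrable (fun x => f x * g x) μ :=
    hf.mul_bdd hg.aestronglyMeasurable (ae_of_all _ (norm_inv_ofReal_sub_le hw'))
  have hfg_re : Integrable (fun x => (f x * g x).re) μ := hfg.re
  have hexpand : ∀ x, ‖f x - conj (g x)‖ ^ 2 = ‖f x‖ ^ 2 + ‖g x‖ ^ 2 - 2 * (f x * g x).re := by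
    intro x
    simp only [Complex.sq_norm, normSq_sub, normSq_conj, conj_conj]
  have hsum : Integrable (fun x => ‖f x‖ ^ 2 + ‖g x‖ ^ 2) μ := hf2.add hg2
  have hexpand_int : Integrable (fun x => ‖f x‖ ^ 2 + ‖g x‖ ^ 2 - 2 * (f x * g x).re) μ :=
    hsum.sub (hfg_re.const_mul 2)
  have hint : ∫ x, ‖f x - conj (g x)‖ ^ 2 ∂μ =
      (stieltjes μ w).im / w.im + (stieltjes μ w').im / w'.im - 2 * (stieltjesSlope μ w w').re := by
    simp only [hexpand]
    rw [integral_sub hsum (hfg_re.const_mul 2), integral_add hf2 hg2, integral_const_mul,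
      integral_sq_norm_inv_ofReal_sub μ hw, integral_sq_norm_inv_ofReal_sub μ hw', stieltjesSlope]
    congr 2
    exact integral_re hfg
  have hgc : Integrable (fun x => conj (g x)) μ := conjCLE.toContinuousLinearMap.integrable_comp hg
  rw [← hint, stieltjes, stieltjes, ← integral_conj, ← integral_sub hf hgc]
  exact sq_norm_integral_le_integral_sq_norm (hf.sub hgc)
    (by simpa only [hexpand] using hexpand_int)

end Stieltjes

theorem norm_sub_le_three_mul_norm_sub_conj {s s' : ℂ} (hs : 0 ≤ s.im) (hs' : 0 ≤ s'.im) :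
    ‖s' - s‖ ≤ 3 * ‖s - conj s'‖ := by
  have him : (s - conj s').im = s.im + s'.im := by simp
  have hs'_conj : ‖s' - conj s'‖ = 2 * s'.im := by
    rw [sub_conj, norm_mul, norm_I, mul_one, norm_real, Real.norm_of_nonneg (by positivity)]
  calc ‖s' - s‖ = ‖(s' - conj s') - (s - conj s')‖ := by ring_nf
    _ ≤ ‖s' - conj s'‖ + ‖s - conj s'‖ := norm_sub_le _ _
    _ ≤ 3 * ‖s - conj s'‖ := by rw [hs'_conj]; linarith [im_le_norm (s - conj s')]

section ApproximateFixedPoint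

variable (μ : Measure ℝ) {z s s' : ℂ}

theorem sub_mul_one_sub_stieltjesSlope [IsFiniteMeasure μ] (hw : 0 < (z + s).im)
    (hw' : 0 < (z + s').im) (hs' : s' = stieltjes μ (z + s')) :
    (s - s') * (1 - stieltjesSlope μ (z + s) (z + s')) = s - stieltjes μ (z + s) := by
  have h := stieltjes_sub_stieltjes μ hw hw'
  rw [← hs'] at h
  linear_combination h

variable [IsProbabilityMeasure μ]

theorem norm_le_of_norm_sub_stieltjes_le {M ε : ℝ} (hM : ∀ᵐ x ∂μ, |x| ≤ M) (hε : ε ≤ 1)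
    (h : ‖s - stieltjes μ (z + s)‖ ≤ ε) :
    ‖s‖ ≤ M + ‖z‖ + 2 := by
  by_cases hfar : ∀ᵐ x : ℝ ∂μ, 1 ≤ ‖(x : ℂ) - (z + s)‖
  · have hm : ‖stieltjes μ (z + s)‖ ≤ 1 := by
      simpa [stieltjes] using norm_integral_le_of_norm_le_const (μ := μ) (C := 1)
        (hfar.mono fun x hx => by simpa only [norm_inv] using inv_le_one_of_one_le₀ hx)
    obtain ⟨x, hx⟩ := hM.exists
    calc ‖s‖ ≤ ‖s - stieltjes μ (z + s)‖ + ‖stieltjes μ (z + s)‖ := norm_le_norm_sub_add _ _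
      _ ≤ M + ‖z‖ + 2 := by linarith [abs_nonneg x, norm_nonneg z]
  · obtain ⟨x, hnear, hx⟩ := ((Filter.not_eventually.1 hfar).and_eventually hM).exists
    calc ‖s‖ = ‖((z + s) - x) + x - z‖ := by ring_nf
      _ ≤ ‖(z + s) - x‖ + ‖(x : ℂ)‖ + ‖z‖ := norm_sub_le_of_le (norm_add_le _ _) le_rfl
      _ ≤ M + ‖z‖ + 2 := by
        rw [norm_sub_rev, norm_real, Real.norm_eq_abs]
        linarith [not_le.1 hnear]

variable {η ε δ : ℝ}

theorem norm_sub_le_of_norm_one_sub_stieltjesSlope_le (hz : 0 ≤ z.im) (hs : 0 ≤ s.im)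
    (hη : 0 < η) (hηw : η ≤ z.im + s.im) (happ : ‖s - stieltjes μ (z + s)‖ ≤ ε)
    (hs'im : 0 < s'.im) (hs' : s' = stieltjes μ (z + s'))
    (hL : ‖1 - stieltjesSlope μ (z + s) (z + s')‖ ≤ δ) :
    ‖s' - s‖ ≤ 3 * (ε + √(ε / η + 2 * δ)) := by
  have hw : 0 < (z + s).im := by rw [add_im]; linarith
  have hw' : 0 < (z + s').im := by rw [add_im]; linarith
  have hA : (stieltjes μ (z + s)).im / (z + s).im ≤ 1 + ε / η := by
    have him := (abs_le.1 ((abs_im_le_norm _).trans happ)).1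
    rw [sub_im] at him
    have hε : 0 ≤ ε := (norm_nonneg _).trans happ
    rw [div_le_iff₀ hw, add_mul, one_mul, add_im]
    have hεη : ε ≤ ε / η * (z.im + s.im) := by
      rw [div_mul_eq_mul_div, le_div_iff₀ hη]; exact mul_le_mul_of_nonneg_left hηw hε
    linarith
  have hB : s'.im / (z + s').im ≤ 1 := by
    rw [div_le_one hw', add_im]; linarith
  have hL_re : 1 - δ ≤ (stieltjesSlope μ (z + s) (z + s')).re := by
    have := re_le_norm (1 - stieltjesSlope μ (z + s) (z + s'))
    rw [sub_re, one_re] at this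
    linarith
  have hsq := sq_norm_stieltjes_sub_conj_le μ hw hw'
  rw [← hs'] at hsq
  have hκ : ‖stieltjes μ (z + s) - conj s'‖ ≤ √(ε / η + 2 * δ) :=
    Real.le_sqrt_of_sq_le (by linarith)
  calc ‖s' - s‖ ≤ 3 * ‖s - conj s'‖ := norm_sub_le_three_mul_norm_sub_conj hs hs'im.le
    _ ≤ 3 * (ε + √(ε / η + 2 * δ)) := by
      gcongr
      exact (norm_sub_le_norm_sub_add_norm_sub _ _ _).trans (add_le_add happ hκ)

theorem norm_sub_le_max_of_norm_sub_stieltjes_le (hz : 0 ≤ z.im) (hs : 0 ≤ s.im)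
    (hη : 0 < η) (hηw : η ≤ z.im + s.im) (happ : ‖s - stieltjes μ (z + s)‖ ≤ ε)
    (hs'im : 0 < s'.im) (hs' : s' = stieltjes μ (z + s')) (hδ : 0 < δ) :
    ‖s' - s‖ ≤ max (ε / δ) (3 * (ε + √(ε / η + 2 * δ))) := by
  rcases le_or_gt ‖1 - stieltjesSlope μ (z + s) (z + s')‖ δ with hL | hL
  · exact le_max_of_le_right
      (norm_sub_le_of_norm_one_sub_stieltjesSlope_le μ hz hs hη hηw happ hs'im hs' hL)
  · have hw : 0 < (z + s).im := by rw [add_im]; linarith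
    have hw' : 0 < (z + s').im := by rw [add_im]; linarith
    refine le_max_of_le_left ?_
    rw [le_div_iff₀ hδ, norm_sub_rev]
    calc ‖s - s'‖ * δ ≤ ‖s - s'‖ * ‖1 - stieltjesSlope μ (z + s) (z + s')‖ := by gcongr
      _ = ‖s - stieltjes μ (z + s)‖ := by
        rw [← norm_mul, sub_mul_one_sub_stieltjesSlope μ hw hw' hs']
      _ ≤ ε := happ

end ApproximateFixedPoint

theorem max_div_rpow_two_thirds_le {ε η : ℝ} (hε : 0 < ε) (hε1 : ε ≤ 1) (hη : 0 < η) :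
    max (ε / ε ^ ((2 : ℝ) / 3)) (3 * (ε + √(ε / η + 2 * ε ^ ((2 : ℝ) / 3)))) ≤
      9 * (ε ^ ((1 : ℝ) / 3) + ε ^ ((1 : ℝ) / 2) / η ^ ((1 : ℝ) / 2)) := by
  set t := ε ^ ((1 : ℝ) / 3) with ht
  have ht0 : 0 < t := by positivity
  have hpow : ∀ n : ℕ, t ^ n = ε ^ ((n : ℝ) / 3) := fun n => by
    rw [ht, ← Real.rpow_natCast, ← Real.rpow_mul hε.le]; ring_nf
  have h23 : ε ^ ((2 : ℝ) / 3) = t ^ 2 := by rw [hpow]; norm_num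
  have hεt : ε ≤ t := by
    have := Real.rpow_le_rpow_of_exponent_ge hε hε1 (by norm_num : (1 : ℝ) / 3 ≤ 1)
    rwa [Real.rpow_one] at this
  have hsqrt : √(ε / η) = ε ^ ((1 : ℝ) / 2) / η ^ ((1 : ℝ) / 2) := by
    rw [Real.sqrt_div' _ hη.le, Real.sqrt_eq_rpow, Real.sqrt_eq_rpow]
  have hsum : √(ε / η + 2 * t ^ 2) ≤ √(ε / η) + 2 * t := by
    rw [Real.sqrt_le_iff]
    have := Real.sq_sqrt (div_nonneg hε.le hη.le)
    constructor <;> nlinarith [Real.sqrt_nonneg (ε / η)]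
  have hquot : ε / t ^ 2 = t := by
    rw [div_eq_iff (by positivity), ← pow_succ', hpow]; norm_num
  have hr : 0 ≤ √(ε / η) := Real.sqrt_nonneg _
  rw [h23, hquot, ← hsqrt]
  exact max_le (by linarith) (by linarith)

theorem stability_lemma
    (μ : Measure ℝ) [IsProbabilityMeasure μ]
    (a b : ℝ) (hsupp : μ (Set.Icc a b)ᶜ = 0)
    (R : ℝ) (hR : 0 < R) :
    ∃ C₀ C₁ : ℝ, 0 < C₀ ∧ 0 < C₁ ∧
      ∀ (z s s' : ℂ) (η ε : ℝ),
        ‖z‖ ≤ R → 0 ≤ z.im → 0 ≤ s.im →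
        0 < η → η ≤ z.im + s.im →
        0 < ε → ε ≤ 1 →
        ‖s - stieltjes μ (z + s)‖ ≤ ε →
        0 < s'.im → s' = stieltjes μ (z + s') →
        ‖s‖ ≤ C₀ ∧ ‖s'‖ ≤ C₀ ∧
          ‖s' - s‖ ≤ C₁ * (ε ^ ((1 : ℝ) / 3) + ε ^ ((1 : ℝ) / 2) / η ^ ((1 : ℝ) / 2)) := by
  have hM : ∀ᵐ x ∂μ, |x| ≤ max |a| |b| := by
    filter_upwards [measure_eq_zero_iff_ae_notMem.1 hsupp] with x hx
    rw [Set.mem_compl_iff, not_not] at hx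
    exact abs_le_max_abs_abs hx.1 hx.2
  refine ⟨max |a| |b| + R + 2, 9, by positivity, by norm_num, ?_⟩
  intro z s s' η ε hzR hzim hsim hη hηw hε hε1 happ hs'im hs'
  refine ⟨?_, ?_, ?_⟩
  · linarith [norm_le_of_norm_sub_stieltjes_le μ hM hε1 happ]
  · have hfixed : ‖s' - stieltjes μ (z + s')‖ ≤ 0 := by rw [← hs', sub_self, norm_zero]
    linarith [norm_le_of_norm_sub_stieltjes_le μ hM zero_le_one hfixed]
  · exact (norm_sub_le_max_of_norm_sub_stieltjes_le μ hzim hsim hη hηw happ hs'im hs'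
      (by positivity)).trans (max_div_rpow_two_thirds_le hε hε1 hη)
end

section
/- Let A_n be an n × n Hermitian matrix written in block form with top-left (n-1) × (n-1) minor A_{n-1}, rightmost column X ∈ ℂ^{n-1} (with the bottom entry a_{nn} ∈ ℝ removed). Suppose λ_i(A_n) is an eigenvalue of A_n that is not an eigenvalue of A_{n-1}, and that X is not orthogonal to any unit eigenvector u_j(A_{n-1}) of A_{n-1}. Then ∑_{j=1}^{n-1} |u_j(A_{n-1})* X|² / (λ_j(A_{n-1}) - λ_i(A_n)) = a_{nn} - λ_i(A_n). -/
/-!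
Write an eigenvector of `A` for `λ` as `(w, c)`, with `B` the leading minor, `x` the last column
and `a` the corner entry, so that `B w + c x = λ w` and `x* w + a c = λ c`. Pairing the first
equation with the eigenvectors `u_j` of `B` gives `(λ - μ_j) ⟪u_j, w⟫ = c ⟪u_j, x⟫`; as no `μ_j`
equals `λ`, this forces `c ≠ 0`, and expanding `x* w` in the eigenbasis turns the second equation
into `c (a - λ) = c ∑ |⟪u_j, x⟫|² / (μ_j - λ)`.
-/

open Matrix BigOperators

open scoped InnerProductSpace

namespace LinearMap.IsSymmetric

variable {𝕜 E ι : Type*} [RCLike 𝕜] [NormedAddCommGroup E] [InnerProductSpace 𝕜 E]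
  {T : E →ₗ[𝕜] E}

theorem inner_apply_of_eigenvector (hT : T.IsSymmetric) {v : E} {μ : ℝ}
    (hv : T v = (μ : 𝕜) • v) (w : E) : ⟪v, T w⟫_𝕜 = μ * ⟪v, w⟫_𝕜 := by
  rw [← hT, hv, inner_smul_left, RCLike.conj_ofReal]

theorem sub_mul_inner_eq_of_apply_add_smul (hT : T.IsSymmetric) {v : E} {μ : ℝ}
    (hv : T v = (μ : 𝕜) • v) {w x : E} {c : 𝕜} {ν : ℝ} (h : T w + c • x = (ν : 𝕜) • w) :
    (ν - μ) * ⟪v, w⟫_𝕜 = c * ⟪v, x⟫_𝕜 := by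
  have h' := congrArg (⟪v, ·⟫_𝕜) h
  simp only [inner_add_right, inner_smul_right, hT.inner_apply_of_eigenvector hv] at h'
  linear_combination -h'

theorem sum_norm_inner_sq_div_eq [Fintype ι] (hT : T.IsSymmetric) (b : OrthonormalBasis ι 𝕜 E)
    {μ : ι → ℝ} (hb : ∀ j, T (b j) = (μ j : 𝕜) • b j) {ν : ℝ} (hν : ∀ j, μ j ≠ ν)
    {w x : E} {a c : 𝕜} (hwc : w ≠ 0 ∨ c ≠ 0)
    (h₁ : T w + c • x = (ν : 𝕜) • w) (h₂ : ⟪x, w⟫_𝕜 + a * c = ν * c) :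
    ((∑ j, ‖⟪b j, x⟫_𝕜‖ ^ 2 / (μ j - ν) : ℝ) : 𝕜) = a - ν := by
  have hsub : ∀ j, (ν : 𝕜) - μ j ≠ 0 := fun j => by
    exact_mod_cast sub_ne_zero.mpr (hν j).symm
  have hcoef : ∀ j, ⟪b j, w⟫_𝕜 = c * ⟪b j, x⟫_𝕜 / (ν - μ j) := fun j => by
    rw [eq_div_iff (hsub j), mul_comm]
    exact hT.sub_mul_inner_eq_of_apply_add_smul (hb j) h₁
  have hc : c ≠ 0 := by
    rintro rfl
    refine hwc.resolve_right (not_not.mpr rfl) ?_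
    rw [← b.sum_repr' w]
    simp [hcoef]
  have hxw : ⟪x, w⟫_𝕜 = c * ∑ j, (‖⟪b j, x⟫_𝕜‖ ^ 2 : 𝕜) / (ν - μ j) := by
    rw [← b.sum_inner_mul_inner, Finset.mul_sum]
    refine Finset.sum_congr rfl fun j _ => ?_
    rw [hcoef, ← inner_conj_symm, ← RCLike.conj_mul]
    ring
  have hneg : ∀ j, (‖⟪b j, x⟫_𝕜‖ ^ 2 : 𝕜) / (μ j - ν) = -((‖⟪b j, x⟫_𝕜‖ ^ 2 : 𝕜) / (ν - μ j)) :=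
    fun j => by rw [← div_neg, neg_sub]
  refine mul_left_cancel₀ hc ?_
  push_cast
  simp only [hneg, Finset.sum_neg_distrib]
  linear_combination hxw - h₂

end LinearMap.IsSymmetric

theorem Fin.init_ne_zero_or_last_ne_zero {α : Type*} [Zero α] {n : ℕ} {v : Fin (n + 1) → α}
    (hv : v ≠ 0) : Fin.init v ≠ 0 ∨ v (Fin.last n) ≠ 0 := by
  contrapose! hv
  exact funext fun k => Fin.lastCases hv.2 (fun k => congrFun hv.1 k) k

namespace Matrix

section Block

variable {α : Type*} [NonUnitalNonAssocSemiring α] {n : ℕ}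

theorem mulVec_apply_castSucc (A : Matrix (Fin (n + 1)) (Fin (n + 1)) α) (v : Fin (n + 1) → α)
    (k : Fin n) :
    (A *ᵥ v) k.castSucc = (A.submatrix Fin.castSucc Fin.castSucc *ᵥ Fin.init v) k
      + A k.castSucc (Fin.last n) * v (Fin.last n) := by
  simp [mulVec, dotProduct, Fin.sum_univ_castSucc, Fin.init]

theorem mulVec_apply_last (A : Matrix (Fin (n + 1)) (Fin (n + 1)) α) (v : Fin (n + 1) → α) :
    (A *ᵥ v) (Fin.last n) = (fun k => A (Fin.last n) k.castSucc) ⬝ᵥ Fin.init v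
      + A (Fin.last n) (Fin.last n) * v (Fin.last n) := by
  simp [mulVec, dotProduct, Fin.sum_univ_castSucc, Fin.init]

end Block

theorem IsHermitian.sum_norm_dotProduct_sq_div_eq {𝕜 ι : Type*} [RCLike 𝕜] [Fintype ι]
    [DecidableEq ι] {B : Matrix ι ι 𝕜} (hB : B.IsHermitian)
    {ν : ℝ} (hν : ∀ j, hB.eigenvalues j ≠ ν) {w x : ι → 𝕜} {a c : 𝕜} (hwc : w ≠ 0 ∨ c ≠ 0)
    (h₁ : B *ᵥ w + c • x = (ν : 𝕜) • w) (h₂ : star x ⬝ᵥ w + a * c = ν * c) :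
    ((∑ j, ‖star ⇑(hB.eigenvectorBasis j) ⬝ᵥ x‖ ^ 2 / (hB.eigenvalues j - ν) : ℝ) : 𝕜)
      = a - ν := by
  have hb (j) : toEuclideanLin B (hB.eigenvectorBasis j)
      = (hB.eigenvalues j : 𝕜) • hB.eigenvectorBasis j := by
    rw [toLpLin_apply, hB.mulVec_eigenvectorBasis j, RCLike.real_smul_eq_coe_smul (K := 𝕜),
      WithLp.toLp_smul, WithLp.toLp_ofLp]
  have key := (isSymmetric_toEuclideanLin_iff.mpr hB).sum_norm_inner_sq_div_eq
    hB.eigenvectorBasis hb hν (w := WithLp.toLp 2 w) (x := WithLp.toLp 2 x) (a := a)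
    (by simpa using hwc) (congrArg (WithLp.toLp 2) h₁)
    (by rwa [EuclideanSpace.inner_toLp_toLp, dotProduct_comm])
  simpa [EuclideanSpace.inner_eq_star_dotProduct, dotProduct_comm] using key

end Matrix

theorem interlacing_identity_general
    (n : ℕ)
    (A : Matrix (Fin (n + 1)) (Fin (n + 1)) ℂ) (hA : A.IsHermitian)
    (hA' : (A.submatrix (Fin.castSucc) (Fin.castSucc)).IsHermitian)
    (X : Fin n → ℂ) (hX : X = fun j => A (Fin.castSucc j) (Fin.last n))
    (i : Fin (n + 1))
    (hsep : ∀ j : Fin n, hA'.eigenvalues j ≠ hA.eigenvalues i) :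
    (∑ j : Fin n,
        ‖∑ k, (starRingEnd ℂ) (hA'.eigenvectorBasis j k) * X k‖ ^ 2
          / (hA'.eigenvalues j - hA.eigenvalues i))
      = (A (Fin.last n) (Fin.last n)).re - hA.eigenvalues i := by
  have hv := congrFun (hA.mulVec_eigenvectorBasis i)
  set v := ⇑(hA.eigenvectorBasis i)
  have hv0 : v ≠ 0 := by simpa [v] using hA.eigenvectorBasis.orthonormal.ne_zero i
  have h₁ : A.submatrix Fin.castSucc Fin.castSucc *ᵥ Fin.init v + v (Fin.last n) • X
      = (hA.eigenvalues i : ℂ) • Fin.init v := funext fun k => by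
    simpa [mulVec_apply_castSucc, hX, mul_comm, Fin.init] using hv k.castSucc
  have hrow : (fun k => A (Fin.last n) k.castSucc) = star X :=
    funext fun k => by rw [hX]; exact (hA.apply _ _).symm
  have h₂ : star X ⬝ᵥ Fin.init v + A (Fin.last n) (Fin.last n) * v (Fin.last n)
      = hA.eigenvalues i * v (Fin.last n) := by
    simpa [mulVec_apply_last, hrow] using hv (Fin.last n)
  have key := hA'.sum_norm_dotProduct_sq_div_eq hsep (Fin.init_ne_zero_or_last_ne_zero hv0) h₁ h₂
  rw [← hA.coe_re_apply_self] at key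
  exact_mod_cast key

theorem interlacing_identity
    (n : ℕ) (hn : 0 < n)
    (A : Matrix (Fin (n + 1)) (Fin (n + 1)) ℂ) (hA : A.IsHermitian)
    (hA' : (A.submatrix (Fin.castSucc) (Fin.castSucc)).IsHermitian)
    (X : Fin n → ℂ) (hX : X = fun j => A (Fin.castSucc j) (Fin.last n))
    (i : Fin (n + 1))
    (hsep : ∀ j : Fin n, hA'.eigenvalues j ≠ hA.eigenvalues i)
    (horth : ∀ j : Fin n,
      (∑ k, (starRingEnd ℂ) (hA'.eigenvectorBasis j k) * X k) ≠ 0) :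
    (∑ j : Fin n,
        ‖∑ k, (starRingEnd ℂ) (hA'.eigenvectorBasis j k) * X k‖ ^ 2
          / (hA'.eigenvalues j - hA.eigenvalues i))
      = (A (Fin.last n) (Fin.last n)).re - hA.eigenvalues i :=
  interlacing_identity_general n A hA hA' X hX i hsep
end

section
/- Let A_n be an n × n Hermitian matrix in block form with (1,1) entry a ∈ ℝ, first column remainder X ∈ ℂ^{n-1}, and bottom-right (n-1) × (n-1) minor A_{n-1}. Let (x, v) with x ∈ ℂ, v ∈ ℂ^{n-1} be a unit eigenvector of A_n with eigenvalue λ_i(A_n), and suppose no eigenvalue of A_{n-1} equals λ_i(A_n). Then |x|² = 1 / (1 + ∑_{j=1}^{n-1} (λ_j(A_{n-1}) - λ_i(A_n))^{-2} |u_j(A_{n-1})* X|²), where u_j(A_{n-1}) are orthonormal eigenvectors of A_{n-1}. -/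
/-!
Write `v = (x, w)`. The lower block of `A v = t v` reads `(A₁ - t) w = -x X`. Pairing with the
eigenvectors `u_j` of `A₁` turns this into `(λ_j - t) ⟪u_j, w⟫ = -x ⟪u_j, X⟫`, so by Parseval
`‖w‖² = |x|² ∑ⱼ (λ_j - t)⁻² |⟪u_j, X⟫|²`, and `|x|² + ‖w‖² = 1` gives the formula.
-/
open Matrix BigOperators

lemma Matrix.submatrix_succ_mulVec_tail {R : Type*} [CommRing R] {n : ℕ}
    (A : Matrix (Fin (n + 1)) (Fin (n + 1)) R) (v : Fin (n + 1) → R) :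
    A.submatrix Fin.succ Fin.succ *ᵥ Fin.tail v
      = Fin.tail (A *ᵥ v) - v 0 • fun i => A i.succ 0 := by
  ext i
  simp only [mulVec, dotProduct, Fin.sum_univ_succ (n := n), Fin.tail, submatrix_apply,
    Pi.sub_apply, Pi.smul_apply, smul_eq_mul]
  ring

section

variable {𝕜 ι : Type*} [RCLike 𝕜] [Fintype ι]

lemma OrthonormalBasis.sum_norm_sq_star_dotProduct
    (b : OrthonormalBasis ι 𝕜 (EuclideanSpace 𝕜 ι)) (w : ι → 𝕜) :
    ∑ j, ‖star ⇑(b j) ⬝ᵥ w‖ ^ 2 = ∑ i, ‖w i‖ ^ 2 := by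
  have := b.sum_sq_norm_inner_right (WithLp.toLp 2 w)
  simp only [EuclideanSpace.inner_eq_star_dotProduct, EuclideanSpace.norm_sq_eq] at this
  simpa only [dotProduct_comm] using this

namespace Matrix.IsHermitian

variable [DecidableEq ι] {A : Matrix ι ι 𝕜} (hA : A.IsHermitian)
include hA

lemma star_eigenvectorBasis_dotProduct_mulVec (j : ι) (w : ι → 𝕜) :
    star ⇑(hA.eigenvectorBasis j) ⬝ᵥ (A *ᵥ w)
      = hA.eigenvalues j * (star ⇑(hA.eigenvectorBasis j) ⬝ᵥ w) := by
  have hrow := congrArg star (hA.mulVec_eigenvectorBasis j)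
  rw [star_mulVec, hA.eq, star_smul, star_trivial (hA.eigenvalues j)] at hrow
  rw [dotProduct_mulVec, hrow, smul_dotProduct, RCLike.real_smul_eq_coe_mul]

lemma sum_norm_sq_eq_of_mulVec_eq_sub {t : ℝ} (ht : ∀ j, hA.eigenvalues j ≠ t)
    {w y : ι → 𝕜} {x : 𝕜} (hw : A *ᵥ w = t • w - x • y) :
    ∑ i, ‖w i‖ ^ 2 = ‖x‖ ^ 2 *
      ∑ j, (hA.eigenvalues j - t)⁻¹ ^ 2 * ‖star ⇑(hA.eigenvectorBasis j) ⬝ᵥ y‖ ^ 2 := by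
  have hcoord (j : ι) : ((hA.eigenvalues j - t : ℝ) : 𝕜) * (star ⇑(hA.eigenvectorBasis j) ⬝ᵥ w)
      = -x * (star ⇑(hA.eigenvectorBasis j) ⬝ᵥ y) := by
    have := hA.star_eigenvectorBasis_dotProduct_mulVec j w
    rw [hw, dotProduct_sub, dotProduct_smul, dotProduct_smul, RCLike.real_smul_eq_coe_mul,
      smul_eq_mul] at this
    push_cast
    linear_combination -this
  rw [← hA.eigenvectorBasis.sum_norm_sq_star_dotProduct w, Finset.mul_sum]
  refine Finset.sum_congr rfl fun j _ => ?_
  have hnorm := congrArg (‖·‖ ^ 2) (hcoord j)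
  simp only [norm_mul, norm_neg, RCLike.norm_ofReal, mul_pow, sq_abs] at hnorm
  have hne : (hA.eigenvalues j - t) ^ 2 ≠ 0 := pow_ne_zero _ (sub_ne_zero.mpr (ht j))
  rw [inv_pow, mul_left_comm, ← hnorm, inv_mul_cancel_left₀ hne]

end Matrix.IsHermitian

end

theorem eigenvector_first_coordinate_general
    (n : ℕ)
    (A : Matrix (Fin (n + 1)) (Fin (n + 1)) ℂ)
    (hA₁ : (A.submatrix (Fin.succ) (Fin.succ)).IsHermitian)
    (X : Fin n → ℂ) (hX : X = fun j => A (Fin.succ j) 0)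
    (t : ℝ) (v : Fin (n + 1) → ℂ)
    (hev : A.mulVec v = (t : ℂ) • v)
    (hunit : ∑ i, ‖v i‖ ^ 2 = 1)
    (hsep : ∀ j : Fin n, hA₁.eigenvalues j ≠ t) :
    ‖v 0‖ ^ 2
      = 1 / (1 + ∑ j : Fin n,
          (hA₁.eigenvalues j - t)⁻¹ ^ 2 *
            ‖∑ k, (starRingEnd ℂ) (hA₁.eigenvectorBasis j k) * X k‖ ^ 2) := by
  have hlower : A.submatrix Fin.succ Fin.succ *ᵥ Fin.tail v = t • Fin.tail v - v 0 • X := by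
    rw [submatrix_succ_mulVec_tail, hev, hX]
    rfl
  have htail : ∑ i : Fin n, ‖v i.succ‖ ^ 2 = ‖v 0‖ ^ 2 * ∑ j : Fin n,
      (hA₁.eigenvalues j - t)⁻¹ ^ 2 *
        ‖∑ k, (starRingEnd ℂ) (hA₁.eigenvectorBasis j k) * X k‖ ^ 2 :=
    hA₁.sum_norm_sq_eq_of_mulVec_eq_sub hsep hlower
  rw [Fin.sum_univ_succ, htail] at hunit
  rw [eq_div_iff (by positivity)]
  linear_combination hunit

theorem eigenvector_first_coordinate
    (n : ℕ) (hn : 0 < n)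
    (A : Matrix (Fin (n + 1)) (Fin (n + 1)) ℂ) (hA : A.IsHermitian)
    (hA₁ : (A.submatrix (Fin.succ) (Fin.succ)).IsHermitian)
    (X : Fin n → ℂ) (hX : X = fun j => A (Fin.succ j) 0)
    (t : ℝ) (v : Fin (n + 1) → ℂ)
    (hev : A.mulVec v = (t : ℂ) • v)
    (hunit : ∑ i, ‖v i‖ ^ 2 = 1)
    (hsep : ∀ j : Fin n, hA₁.eigenvalues j ≠ t) :
    ‖v 0‖ ^ 2
      = 1 / (1 + ∑ j : Fin n,
          (hA₁.eigenvalues j - t)⁻¹ ^ 2 *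
            ‖∑ k, (starRingEnd ℂ) (hA₁.eigenvectorBasis j k) * X k‖ ^ 2) :=
  eigenvector_first_coordinate_general n A hA₁ X hX t v hev hunit hsep
end

section
/- Let μ be a compactly supported probability measure and suppose s satisfies s = m_μ(z + s) + O(ε) with |z| ≤ R and Im(s) ≥ 0, Im(z) > 0, where ε ≤ 1. If μ is supported in [−b, b], then |s| ≤ max(C, 4b + 4R + 2) for an absolute constant C; in particular s = O_{R,μ}(1). -/
open MeasureTheory

/-! Since `|m_μ(w)| ≤ (|w| - b)⁻¹` off `[-b, b]`, `‖s‖ > 4b + 4R + 2` would give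
`|z + s| - b ≥ 2`, hence `|m_μ(z + s)| ≤ 1/2` and `‖s‖ ≤ ε + 1/2 ≤ 3/2`, a contradiction;
so `C = 1` works. -/

theorem norm_stieltjes_le_inv_of_ae_le_norm_sub {μ : Measure ℝ} [IsProbabilityMeasure μ]
    {w : ℂ} {d : ℝ} (hd : 0 < d) (h : ∀ᵐ x : ℝ ∂μ, d ≤ ‖(x : ℂ) - w‖) :
    ‖stieltjes μ w‖ ≤ d⁻¹ := by
  have hbound : ∀ᵐ x : ℝ ∂μ, ‖((x : ℂ) - w)⁻¹‖ ≤ d⁻¹ := by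
    filter_upwards [h] with x hx
    rw [norm_inv]
    exact inv_anti₀ hd hx
  simpa [stieltjes] using norm_integral_le_of_norm_le_const hbound

theorem norm_stieltjes_le_inv_norm_sub {μ : Measure ℝ} [IsProbabilityMeasure μ] {b : ℝ}
    (hsupp : μ (Set.Icc (-b) b)ᶜ = 0) {w : ℂ} (hw : b < ‖w‖) :
    ‖stieltjes μ w‖ ≤ (‖w‖ - b)⁻¹ := by
  refine norm_stieltjes_le_inv_of_ae_le_norm_sub (sub_pos.2 hw) ?_
  filter_upwards [mem_ae_iff.2 hsupp] with x hx
  have hxb : ‖(x : ℂ)‖ ≤ b := by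
    rw [Complex.norm_real, Real.norm_eq_abs]
    exact abs_le.2 hx
  calc ‖w‖ - b ≤ ‖w‖ - ‖(x : ℂ)‖ := by linarith
    _ ≤ ‖w - x‖ := norm_sub_norm_le w x
    _ = ‖(x : ℂ) - w‖ := norm_sub_rev w x

theorem apriori_bound :
    ∃ C : ℝ, 0 < C ∧
      ∀ (μ : Measure ℝ), IsProbabilityMeasure μ →
        ∀ (b R : ℝ) (z s : ℂ) (ε : ℝ),
          0 < b → μ (Set.Icc (-b) b)ᶜ = 0 →
          0 < R → ‖z‖ ≤ R → 0 < z.im → 0 ≤ s.im →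
          0 < ε → ε ≤ 1 →
          ‖s - stieltjes μ (z + s)‖ ≤ ε →
          ‖s‖ ≤ max C (4 * b + 4 * R + 2) := by
  refine ⟨1, one_pos, fun μ _ b R z s ε _ hsupp _ hzR _ _ _ hε1 hclose => ?_⟩
  refine le_max_of_le_right (not_lt.1 fun hs => ?_)
  have hzs : ‖s‖ - R ≤ ‖z + s‖ := by
    have := norm_sub_norm_le s (-z)
    rw [sub_neg_eq_add, norm_neg, add_comm] at this
    linarith
  have hm : ‖stieltjes μ (z + s)‖ ≤ 2⁻¹ :=
    (norm_stieltjes_le_inv_norm_sub hsupp (by linarith)).trans (inv_anti₀ two_pos (by linarith))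
  have := norm_le_norm_sub_add s (stieltjes μ (z + s))
  linarith
end
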